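/- arXiv:2105.02344 — 2 statements merged into one kernel-verified Lean document; each statement's English description precedes it below -/
import Mathlib

section
/- For any two probability measures P and Q on the same measurable space, 1 - TV(P,Q) ≥ (1/2)·exp(-D_KL(P‖Q)), where TV denotes the total variation distance and D_KL the Kullback–Leibler divergence. -/
/-!
Write `p = dP/dQ`. The overlap `m = ∫ min(p, 1) dQ` satisfies `TV(P, Q) ≤ 1 - m`. Since
`min(p, 1) · max(p, 1) = p` and `∫ max(p, 1) dQ ≤ 2`, Cauchy–Schwarz bounds the Bhattacharyya
coefficient `B = ∫ √p dQ` by `B² ≤ 2m`. On the other hand `B ≥ ∫ p^(-1/2) dP`, and Jensen's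
inequality for `exp` under `P` gives `∫ p^(-1/2) dP ≥ exp(-KL(P‖Q)/2)`. Hence
`exp(-KL(P‖Q)) ≤ B² ≤ 2m ≤ 2(1 - TV(P, Q))`.
-/

open MeasureTheory
open scoped ENNReal
open Classical

/-- Total variation distance: `sup_A |P(A) - Q(A)|` over measurable sets `A`. -/
noncomputable def tvDist {Ω : Type*} [MeasurableSpace Ω] (P Q : Measure Ω) : ℝ :=
  ⨆ A : {s : Set Ω // MeasurableSet s}, |(P A).toReal - (Q A).toReal|

/-- Kullback–Leibler divergence: `∫ log (dP/dQ) dP` when `P ≪ Q` (and this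
integrand is integrable), `+∞` otherwise. -/
noncomputable def klDiv' {Ω : Type*} [MeasurableSpace Ω] (P Q : Measure Ω) : ℝ≥0∞ :=
  if P ≪ Q ∧ Integrable (fun ω => Real.log (P.rnDeriv Q ω).toReal) P then
    ENNReal.ofReal (∫ ω, Real.log (P.rnDeriv Q ω).toReal ∂P)
  else ⊤

namespace ENNReal

theorem ofReal_exp_mul_log_toReal {x : ℝ≥0∞} (h0 : x ≠ 0) (htop : x ≠ ⊤) (r : ℝ) :
    ENNReal.ofReal (Real.exp (r * Real.log x.toReal)) = x ^ r := by
  have hpos : 0 < x.toReal := ENNReal.toReal_pos h0 htop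
  rw [mul_comm, ← Real.rpow_def_of_pos hpos, ← ENNReal.ofReal_rpow_of_pos hpos,
    ENNReal.ofReal_toReal htop]

theorem mul_rpow_neg_half_le (x : ℝ≥0∞) : x * x ^ (-(1 / 2) : ℝ) ≤ x ^ (1 / 2 : ℝ) := by
  rcases eq_or_ne x 0 with rfl | h0
  · simp
  rcases eq_or_ne x ⊤ with rfl | htop
  · simp
  · nth_rewrite 1 [← ENNReal.rpow_one x]
    rw [← ENNReal.rpow_add _ _ h0 htop]
    norm_num

end ENNReal

theorem ofReal_exp_integral_le_lintegral {α : Type*} [MeasurableSpace α] {μ : Measure α}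
    [IsProbabilityMeasure μ] {f : α → ℝ} (hf : Integrable f μ) :
    ENNReal.ofReal (Real.exp (∫ x, f x ∂μ)) ≤ ∫⁻ x, ENNReal.ofReal (Real.exp (f x)) ∂μ := by
  have hexp_nonneg : 0 ≤ᵐ[μ] fun x => Real.exp (f x) := ae_of_all _ fun _ => (Real.exp_pos _).le
  by_cases hi : Integrable (fun x => Real.exp (f x)) μ
  · rw [← ofReal_integral_eq_lintegral_ofReal hi hexp_nonneg]
    exact ENNReal.ofReal_le_ofReal <| convexOn_exp.map_integral_le
      Real.continuous_exp.continuousOn isClosed_univ (ae_of_all _ fun _ => Set.mem_univ _) hf hi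
  · have hmeas : AEStronglyMeasurable (fun x => Real.exp (f x)) μ :=
      Real.continuous_exp.comp_aestronglyMeasurable hf.1
    have hinf : ¬ HasFiniteIntegral (fun x => Real.exp (f x)) μ := fun h => hi ⟨hmeas, h⟩
    rw [hasFiniteIntegral_iff_ofReal hexp_nonneg, not_lt, top_le_iff] at hinf
    simp [hinf]

theorem lintegral_sqrt_mul_sq_le {α : Type*} [MeasurableSpace α] (μ : Measure α)
    {f g : α → ℝ≥0∞} (hf : AEMeasurable f μ) (hg : AEMeasurable g μ) :
    (∫⁻ x, (f x * g x) ^ (1 / 2 : ℝ) ∂μ) ^ 2 ≤ (∫⁻ x, f x ∂μ) * ∫⁻ x, g x ∂μ := by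
  have hsq : ∀ x : ℝ≥0∞, (x ^ (1 / 2 : ℝ)) ^ (2 : ℝ) = x := fun x => by
    rw [← ENNReal.rpow_mul]; norm_num
  have hcs := ENNReal.lintegral_mul_le_Lp_mul_Lq μ Real.HolderConjugate.two_two
    (hf.pow_const (1 / 2 : ℝ)) (hg.pow_const (1 / 2 : ℝ))
  simp only [Pi.mul_apply, hsq, ← ENNReal.mul_rpow_of_nonneg _ _ (by norm_num : (0 : ℝ) ≤ 1 / 2)]
    at hcs
  calc (∫⁻ x, (f x * g x) ^ (1 / 2 : ℝ) ∂μ) ^ 2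
      ≤ (((∫⁻ x, f x ∂μ) * ∫⁻ x, g x ∂μ) ^ (1 / 2 : ℝ)) ^ (2 : ℝ) := by
        rw [← ENNReal.rpow_natCast]
        exact ENNReal.rpow_le_rpow (by simpa [one_div] using hcs) (by norm_num)
    _ = (∫⁻ x, f x ∂μ) * ∫⁻ x, g x ∂μ := hsq _

section BretagnolleHuber

variable {Ω : Type*} [MeasurableSpace Ω]

noncomputable def overlap (P Q : Measure Ω) : ℝ≥0∞ := ∫⁻ ω, min (P.rnDeriv Q ω) 1 ∂Q

noncomputable def bhattacharyya (P Q : Measure Ω) : ℝ≥0∞ :=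
  ∫⁻ ω, P.rnDeriv Q ω ^ (1 / 2 : ℝ) ∂Q

variable {P Q : Measure Ω}

theorem tvDist_le {c : ℝ} (h : ∀ A, MeasurableSet A → |(P A).toReal - (Q A).toReal| ≤ c) :
    tvDist P Q ≤ c :=
  have : Nonempty {s : Set Ω // MeasurableSet s} := ⟨⟨∅, .empty⟩⟩
  ciSup_le fun A => h A.1 A.2

theorem tvDist_le_one [IsProbabilityMeasure P] [IsProbabilityMeasure Q] : tvDist P Q ≤ 1 :=
  tvDist_le fun _ _ => abs_sub_le_of_nonneg_of_le ENNReal.toReal_nonneg measureReal_le_one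
    ENNReal.toReal_nonneg measureReal_le_one

theorem overlap_le_add_compl {A : Set Ω} (hA : MeasurableSet A) :
    overlap P Q ≤ Q A + P Aᶜ :=
  calc overlap P Q
      = (∫⁻ ω in A, min (P.rnDeriv Q ω) 1 ∂Q) + ∫⁻ ω in Aᶜ, min (P.rnDeriv Q ω) 1 ∂Q :=
        (lintegral_add_compl _ hA).symm
    _ ≤ (∫⁻ _ in A, 1 ∂Q) + ∫⁻ ω in Aᶜ, P.rnDeriv Q ω ∂Q :=
        add_le_add (lintegral_mono fun _ => min_le_right _ _)
          (lintegral_mono fun _ => min_le_left _ _)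
    _ ≤ Q A + P Aᶜ := by
        rw [setLIntegral_one]
        gcongr
        exact Measure.setLIntegral_rnDeriv_le _

theorem overlap_ne_top [IsFiniteMeasure Q] : overlap P Q ≠ ⊤ :=
  ne_top_of_le_ne_top (measure_ne_top Q Set.univ) <| by
    simpa using overlap_le_add_compl (P := P) (Q := Q) MeasurableSet.univ

theorem tvDist_le_one_sub_overlap [IsProbabilityMeasure P] [IsProbabilityMeasure Q] :
    tvDist P Q ≤ 1 - (overlap P Q).toReal := by
  have hreal : ∀ A, MeasurableSet A → (overlap P Q).toReal ≤ Q.real A + 1 - P.real A := by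
    intro A hA
    have := ENNReal.toReal_mono (by finiteness) (overlap_le_add_compl (P := P) (Q := Q) hA)
    rwa [ENNReal.toReal_add (by finiteness) (by finiteness), ← measureReal_def,
      ← measureReal_def, probReal_compl_eq_one_sub hA, ← add_sub_assoc] at this
  refine tvDist_le fun A hA => abs_sub_le_iff.2 ⟨?_, ?_⟩ <;> simp only [← measureReal_def]
  · linarith [hreal A hA]
  · have := hreal Aᶜ hA.compl
    rw [probReal_compl_eq_one_sub hA, probReal_compl_eq_one_sub hA] at this
    linarith

theorem bhattacharyya_sq_le_two_mul_overlap [IsProbabilityMeasure P] [IsProbabilityMeasure Q] :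
    bhattacharyya P Q ^ 2 ≤ 2 * overlap P Q := by
  have hp : Measurable (P.rnDeriv Q) := Measure.measurable_rnDeriv P Q
  have hmax : ∫⁻ ω, max (P.rnDeriv Q ω) 1 ∂Q ≤ 2 :=
    calc ∫⁻ ω, max (P.rnDeriv Q ω) 1 ∂Q ≤ ∫⁻ ω, P.rnDeriv Q ω + 1 ∂Q :=
          lintegral_mono fun _ => max_le le_self_add le_add_self
      _ ≤ P Set.univ + Q Set.univ := by
          rw [lintegral_add_left hp, lintegral_one]
          gcongr
          exact Measure.lintegral_rnDeriv_le
      _ = 2 := by simp [one_add_one_eq_two]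
  calc bhattacharyya P Q ^ 2
      = (∫⁻ ω, (min (P.rnDeriv Q ω) 1 * max (P.rnDeriv Q ω) 1) ^ (1 / 2 : ℝ) ∂Q) ^ 2 := by
        simp only [min_mul_max, mul_one, bhattacharyya]
    _ ≤ overlap P Q * ∫⁻ ω, max (P.rnDeriv Q ω) 1 ∂Q :=
        lintegral_sqrt_mul_sq_le Q (hp.min measurable_const).aemeasurable
          (hp.max measurable_const).aemeasurable
    _ ≤ 2 * overlap P Q := by
        rw [mul_comm]
        gcongr

theorem lintegral_rnDeriv_rpow_neg_half_le_bhattacharyya [P.HaveLebesgueDecomposition Q]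
    (hPQ : P ≪ Q) :
    ∫⁻ ω, P.rnDeriv Q ω ^ (-(1 / 2) : ℝ) ∂P ≤ bhattacharyya P Q := by
  calc ∫⁻ ω, P.rnDeriv Q ω ^ (-(1 / 2) : ℝ) ∂P
      = ∫⁻ ω, P.rnDeriv Q ω * P.rnDeriv Q ω ^ (-(1 / 2) : ℝ) ∂Q :=
        (lintegral_rnDeriv_mul hPQ
          ((Measure.measurable_rnDeriv P Q).pow_const _).aemeasurable).symm
    _ ≤ bhattacharyya P Q := lintegral_mono fun _ => ENNReal.mul_rpow_neg_half_le _

theorem ofReal_exp_neg_half_integral_log_rnDeriv_le_bhattacharyya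
    [P.HaveLebesgueDecomposition Q] (hPQ : P ≪ Q) [IsProbabilityMeasure P]
    (hint : Integrable (fun ω => Real.log (P.rnDeriv Q ω).toReal) P) :
    ENNReal.ofReal (Real.exp (-(1 / 2) * ∫ ω, Real.log (P.rnDeriv Q ω).toReal ∂P)) ≤
      bhattacharyya P Q := by
  have hae : ∀ᵐ ω ∂P, ENNReal.ofReal (Real.exp (-(1 / 2) * Real.log (P.rnDeriv Q ω).toReal)) =
      P.rnDeriv Q ω ^ (-(1 / 2) : ℝ) := by
    filter_upwards [Measure.rnDeriv_pos hPQ, hPQ.ae_le (Measure.rnDeriv_lt_top P Q)]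
      with ω h0 htop
    exact ENNReal.ofReal_exp_mul_log_toReal h0.ne' htop.ne _
  calc ENNReal.ofReal (Real.exp (-(1 / 2) * ∫ ω, Real.log (P.rnDeriv Q ω).toReal ∂P))
      = ENNReal.ofReal (Real.exp (∫ ω, -(1 / 2) * Real.log (P.rnDeriv Q ω).toReal ∂P)) := by
        rw [integral_const_mul]
    _ ≤ ∫⁻ ω, ENNReal.ofReal (Real.exp (-(1 / 2) * Real.log (P.rnDeriv Q ω).toReal)) ∂P :=
        ofReal_exp_integral_le_lintegral (hint.const_mul _)
    _ = ∫⁻ ω, P.rnDeriv Q ω ^ (-(1 / 2) : ℝ) ∂P := lintegral_congr_ae hae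
    _ ≤ bhattacharyya P Q := lintegral_rnDeriv_rpow_neg_half_le_bhattacharyya hPQ

theorem exp_neg_integral_log_rnDeriv_le_two_mul_overlap (hPQ : P ≪ Q)
    [IsProbabilityMeasure P] [IsProbabilityMeasure Q]
    (hint : Integrable (fun ω => Real.log (P.rnDeriv Q ω).toReal) P) :
    Real.exp (-∫ ω, Real.log (P.rnDeriv Q ω).toReal ∂P) ≤ 2 * (overlap P Q).toReal := by
  set I := ∫ ω, Real.log (P.rnDeriv Q ω).toReal ∂P
  have hsq : Real.exp (-I) = Real.exp (-(1 / 2) * I) ^ 2 := by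
    rw [← Real.exp_nat_mul]; ring_nf
  have h : ENNReal.ofReal (Real.exp (-I)) ≤ 2 * overlap P Q :=
    calc ENNReal.ofReal (Real.exp (-I)) = ENNReal.ofReal (Real.exp (-(1 / 2) * I)) ^ 2 := by
          rw [hsq, ENNReal.ofReal_pow (Real.exp_pos _).le]
      _ ≤ bhattacharyya P Q ^ 2 := by
          gcongr; exact ofReal_exp_neg_half_integral_log_rnDeriv_le_bhattacharyya hPQ hint
      _ ≤ 2 * overlap P Q := bhattacharyya_sq_le_two_mul_overlap
  have := (ENNReal.ofReal_le_iff_le_toReal (ENNReal.mul_ne_top (by simp) overlap_ne_top)).1 h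
  rwa [ENNReal.toReal_mul, ENNReal.toReal_ofNat] at this

end BretagnolleHuber

theorem stmt_2 {Ω : Type*} [MeasurableSpace Ω] (P Q : Measure Ω)
    [IsProbabilityMeasure P] [IsProbabilityMeasure Q] :
    1 - tvDist P Q ≥
      (1 / 2) * (if klDiv' P Q = ⊤ then 0 else Real.exp (-(klDiv' P Q).toReal)) := by
  by_cases htop : klDiv' P Q = ⊤
  · simpa [htop] using tvDist_le_one (P := P) (Q := Q)
  obtain ⟨hPQ, hint⟩ : P ≪ Q ∧ Integrable (fun ω => Real.log (P.rnDeriv Q ω).toReal) P := by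
    by_contra h
    exact htop (if_neg h)
  have hkl : (klDiv' P Q).toReal = max (∫ ω, Real.log (P.rnDeriv Q ω).toReal ∂P) 0 := by
    rw [klDiv', if_pos ⟨hPQ, hint⟩, ENNReal.toReal_ofReal']
  have hexp : Real.exp (-(klDiv' P Q).toReal) ≤
      Real.exp (-∫ ω, Real.log (P.rnDeriv Q ω).toReal ∂P) := by
    rw [hkl]; gcongr; exact le_max_left _ _
  rw [if_neg htop]
  linarith [tvDist_le_one_sub_overlap (P := P) (Q := Q),
    exp_neg_integral_log_rnDeriv_le_two_mul_overlap hPQ hint]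
end

section
/- Let 𝒲 be a finite set, W a 𝒲-valued random variable with P(W = w) = e(w) > 0, and Y = μ(W) + ε where ε is independent of W with mean 0 and variance σ². Fix π : 𝒲 → [0,1] and μ̂ : 𝒲 → ℝ, and let Γ̂ = ∑_w π(w)(μ̂(w) + (1{W=w}/e(w))(Y - μ̂(w))). Then E[(Γ̂ - ∑_w π(w)μ(w))²] = ∑_w π(w)²·((μ̂(w) - μ(w))² + σ²)/e(w) - (∑_w π(w)(μ̂(w) - μ(w)))². -/
/-!
Writing `A = ∑ w, π w * (μhat w - μ w)`, the centred estimator is `a W + b W * ε` with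
`a w = A + (π w / e w) * (μ w - μhat w)` and `b w = π w / e w`. Independence of `ε` and `W`
with `E ε = 0` kills the cross term, so the second moment is
`∑ w, e w * (a w ^ 2 + b w ^ 2 * σ ^ 2)`; expanding and using `∑ w, e w = 1` gives the formula.
-/

open MeasureTheory ProbabilityTheory

section FiniteValued

variable {Ω α : Type*} [MeasurableSpace Ω] {P : Measure Ω}
  [Fintype α] [MeasurableSpace α] [MeasurableSingletonClass α] {W : Ω → α}

lemma integrable_comp_of_fintype [IsFiniteMeasure P] (hW : Measurable W) (f : α → ℝ) :
    Integrable (fun ω => f (W ω)) P :=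
  Integrable.of_finite.comp_measurable hW

lemma integral_comp_eq_sum [IsFiniteMeasure P] (hW : Measurable W) (f : α → ℝ) :
    ∫ ω, f (W ω) ∂P = ∑ w, P.real (W ⁻¹' {w}) * f w := by
  rw [← integral_map hW.aemeasurable (measurable_of_finite f).aestronglyMeasurable,
    integral_fintype Integrable.of_finite]
  simp only [map_measureReal_apply hW (measurableSet_singleton _), smul_eq_mul]

lemma sum_measureReal_preimage_singleton_eq_one [IsProbabilityMeasure P] (hW : Measurable W) :
    ∑ w, P.real (W ⁻¹' {w}) = 1 := by
  simpa using (integral_comp_eq_sum (P := P) hW fun _ => (1 : ℝ)).symm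

variable {X : Ω → ℝ}

lemma integrable_comp_mul_of_indepFun [IsFiniteMeasure P] (hW : Measurable W)
    (hX : Integrable X P) (hindep : IndepFun X W P) (f : α → ℝ) :
    Integrable (fun ω => f (W ω) * X ω) P :=
  (hindep.symm.comp (measurable_of_finite f) measurable_id).integrable_mul
    (integrable_comp_of_fintype hW f) hX

lemma integral_comp_mul_of_indepFun (hW : Measurable W) (hX : AEStronglyMeasurable X P)
    (hindep : IndepFun X W P) (f : α → ℝ) :
    ∫ ω, f (W ω) * X ω ∂P = (∫ ω, f (W ω) ∂P) * ∫ ω, X ω ∂P :=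
  (hindep.symm.comp (measurable_of_finite f) measurable_id).integral_fun_mul_eq_mul_integral
    ((measurable_of_finite f).comp hW).aestronglyMeasurable hX

lemma integral_sq_add_mul_of_indepFun [IsFiniteMeasure P] (hW : Measurable W)
    (hindep : IndepFun X W P) (hX : Integrable X P) (hX2 : Integrable (fun ω => X ω ^ 2) P)
    (hmean : ∫ ω, X ω ∂P = 0) (a b : α → ℝ) :
    ∫ ω, (a (W ω) + b (W ω) * X ω) ^ 2 ∂P =
      ∑ w, P.real (W ⁻¹' {w}) * (a w ^ 2 + b w ^ 2 * ∫ ω, X ω ^ 2 ∂P) := by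
  have hindep2 : IndepFun (fun ω => X ω ^ 2) W P :=
    hindep.comp (measurable_id.pow_const 2) measurable_id
  have h1 : Integrable (fun ω => a (W ω) ^ 2) P :=
    integrable_comp_of_fintype hW (fun w => a w ^ 2)
  have h2 : Integrable (fun ω => 2 * a (W ω) * b (W ω) * X ω) P :=
    integrable_comp_mul_of_indepFun hW hX hindep (fun w => 2 * a w * b w)
  have h3 : Integrable (fun ω => b (W ω) ^ 2 * X ω ^ 2) P :=
    integrable_comp_mul_of_indepFun hW hX2 hindep2 (fun w => b w ^ 2)
  calc ∫ ω, (a (W ω) + b (W ω) * X ω) ^ 2 ∂P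
      = ∫ ω, (a (W ω) ^ 2 + 2 * a (W ω) * b (W ω) * X ω + b (W ω) ^ 2 * X ω ^ 2) ∂P := by
        congr 1; funext ω; ring
    _ = (∫ ω, a (W ω) ^ 2 ∂P) + (∫ ω, 2 * a (W ω) * b (W ω) * X ω ∂P) +
          ∫ ω, b (W ω) ^ 2 * X ω ^ 2 ∂P := by
        rw [integral_add (f := fun ω => a (W ω) ^ 2 + 2 * a (W ω) * b (W ω) * X ω) (h1.add h2) h3,
          integral_add h1 h2]
    _ = ∑ w, P.real (W ⁻¹' {w}) * (a w ^ 2 + b w ^ 2 * ∫ ω, X ω ^ 2 ∂P) := by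
        rw [integral_comp_mul_of_indepFun hW hX.aestronglyMeasurable hindep
            (fun w => 2 * a w * b w),
          integral_comp_mul_of_indepFun hW hX2.aestronglyMeasurable hindep2 (fun w => b w ^ 2),
          integral_comp_eq_sum hW (fun w => a w ^ 2), integral_comp_eq_sum hW (fun w => b w ^ 2),
          hmean, Finset.sum_mul, mul_zero, add_zero, ← Finset.sum_add_distrib]
        exact Finset.sum_congr rfl fun w _ => by ring

end FiniteValued

lemma aipw_sub_sum_eq {α : Type*} [Fintype α] [DecidableEq α] (π m μ e : α → ℝ) (x : α)
    (y : ℝ) :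
    ∑ w, π w * (m w + (if x = w then 1 else 0) / e w * (y - m w)) - ∑ w, π w * μ w =
      ∑ w, π w * (m w - μ w) + π x / e x * (y - m x) := by
  have hsel : ∑ w, π w * ((if x = w then 1 else 0) / e w * (y - m w)) =
      π x / e x * (y - m x) := by
    simp only [ite_div, one_div, zero_div, ite_mul, zero_mul, mul_ite, mul_zero,
      Finset.sum_ite_eq, Finset.mem_univ, if_true]
    ring
  rw [Finset.sum_congr rfl fun w _ => mul_add (π w) _ _, Finset.sum_add_distrib, hsel]
  simp only [mul_sub, Finset.sum_sub_distrib]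
  ring

theorem stmt_13_general {Ω : Type*} [MeasurableSpace Ω] (P : Measure Ω) [IsProbabilityMeasure P]
    {W' : Type*} [Fintype W'] [DecidableEq W'] [MeasurableSpace W'] [MeasurableSingletonClass W']
    (W : Ω → W') (hW : Measurable W) (εv : Ω → ℝ)
    (hindep : IndepFun εv W P)
    (hint1 : Integrable εv P) (hint2 : Integrable (fun ω => εv ω ^ 2) P)
    (hmean : (∫ ω, εv ω ∂P) = 0) (σ : ℝ) (hvar : (∫ ω, εv ω ^ 2 ∂P) = σ ^ 2)
    (μ μhat : W' → ℝ) (π : W' → ℝ)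
    (e : W' → ℝ) (he : ∀ w, e w = (P {ω | W ω = w}).toReal) (hepos : ∀ w, 0 < e w)
    (Y : Ω → ℝ) (hYdef : ∀ ω, Y ω = μ (W ω) + εv ω) :
    (∫ ω, (∑ w, π w * (μhat w + (if W ω = w then 1 else 0) / e w * (Y ω - μhat w)) -
        ∑ w, π w * μ w) ^ 2 ∂P) =
      ∑ w, (π w) ^ 2 * ((μhat w - μ w) ^ 2 + σ ^ 2) / e w -
        (∑ w, π w * (μhat w - μ w)) ^ 2 := by
  set A := ∑ w, π w * (μhat w - μ w)
  set a : W' → ℝ := fun w => A + π w / e w * (μ w - μhat w) with ha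
  set b : W' → ℝ := fun w => π w / e w with hb
  have he' : ∀ w, P.real (W ⁻¹' {w}) = e w := fun w => (he w).symm
  have hcentred : ∀ ω, ∑ w, π w * (μhat w + (if W ω = w then 1 else 0) / e w * (Y ω - μhat w)) -
      ∑ w, π w * μ w = a (W ω) + b (W ω) * εv ω := by
    intro ω
    rw [aipw_sub_sum_eq, hYdef, ha, hb]
    ring
  have hterm : ∀ w, e w * (a w ^ 2 + b w ^ 2 * σ ^ 2) =
      π w ^ 2 * ((μhat w - μ w) ^ 2 + σ ^ 2) / e w + A ^ 2 * e w
        - 2 * A * (π w * (μhat w - μ w)) := by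
    intro w
    rw [ha, hb]
    field_simp [(hepos w).ne']
    ring
  have hesum : ∑ w, e w = 1 := by
    simpa only [he'] using sum_measureReal_preimage_singleton_eq_one (P := P) hW
  simp only [hcentred]
  rw [integral_sq_add_mul_of_indepFun hW hindep hint1 hint2 hmean, hvar]
  simp only [he', hterm, Finset.sum_sub_distrib, Finset.sum_add_distrib, ← Finset.mul_sum,
    hesum]
  ring

theorem stmt_13 {Ω : Type*} [MeasurableSpace Ω] (P : Measure Ω) [IsProbabilityMeasure P]
    {W' : Type*} [Fintype W'] [DecidableEq W'] [MeasurableSpace W'] [MeasurableSingletonClass W']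
    (W : Ω → W') (hW : Measurable W) (εv : Ω → ℝ) (hεmeas : Measurable εv)
    (hindep : IndepFun εv W P)
    (hint1 : Integrable εv P) (hint2 : Integrable (fun ω => εv ω ^ 2) P)
    (hmean : (∫ ω, εv ω ∂P) = 0) (σ : ℝ) (hvar : (∫ ω, εv ω ^ 2 ∂P) = σ ^ 2)
    (μ μhat : W' → ℝ) (π : W' → ℝ) (hπ : ∀ w, π w ∈ Set.Icc (0 : ℝ) 1)
    (e : W' → ℝ) (he : ∀ w, e w = (P {ω | W ω = w}).toReal) (hepos : ∀ w, 0 < e w)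
    (Y : Ω → ℝ) (hYdef : ∀ ω, Y ω = μ (W ω) + εv ω) :
    (∫ ω, (∑ w, π w * (μhat w + (if W ω = w then 1 else 0) / e w * (Y ω - μhat w)) -
        ∑ w, π w * μ w) ^ 2 ∂P) =
      ∑ w, (π w) ^ 2 * ((μhat w - μ w) ^ 2 + σ ^ 2) / e w -
        (∑ w, π w * (μhat w - μ w)) ^ 2 :=
  stmt_13_general P W hW εv hindep hint1 hint2 hmean σ hvar μ μhat π e he hepos Y hYdef
end
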